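/- For all integers m ≥ 0 and n ≥ 0, a̅_{2m+1}(8(5n+3)+1) ≡ 2·g(n) (mod 8), where g(n) denotes the coefficient of q^n in the formal power series f_5^3 = (q^5;q^5)_∞^3. -/

import Mathlib

/-- The infinite product `(q^h; q^h)_∞ = ∏_{k ≥ 0} (1 - q^{h(k+1)})` as a formal power
series over `R`.  Since the factor `1 - q^{h(k+1)}` only affects coefficients of
degree `≥ k + 1`, the coefficient of `qⁿ` is that of the finite truncated product
over `k < n + 1`. -/
noncomputable def qPochInf (R : Type*) [CommRing R] (h : ℕ) : PowerSeries R :=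
  PowerSeries.mk fun n =>
    PowerSeries.coeff (R := R) n
      (∏ k ∈ Finset.range (n + 1), (1 - PowerSeries.X ^ (h * (k + 1))))

/-- `abar` is the generalized overcubic partition family: for every `c ≥ 1`,
`∑_{n≥0} a̅_c(n) qⁿ = f₄^(c-1) / (f₁² f₂^(2c-3))`, stated multiplied out (both sides
multiplied by `f₁² f₂^(2c-3) · f₂³ = f₁² f₂^(2c) / f₂³`, i.e. as
`(∑ a̅_c(n) qⁿ) · f₁² · f₂^(2c) = f₄^(c-1) · f₂³`) so as to avoid the negative
exponent `2c - 3 = -1` occurring when `c = 1`; this is equivalent since the `fₕ`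
are units in the ring of formal power series. -/
def IsGenOvercubic (abar : ℕ → ℕ → ℕ) : Prop :=
  ∀ c : ℕ, 1 ≤ c →
    (PowerSeries.mk fun n => (abar c n : ℤ)) * qPochInf ℤ 1 ^ 2 * qPochInf ℤ 2 ^ (2 * c) =
      qPochInf ℤ 4 ^ (c - 1) * qPochInf ℤ 2 ^ 3


/-!
Gauss's identities `f₁² = f₂ φ(-q)` and `f₂² = f₁ ψ(q)` both come from the finite Jacobi triple
product `∏_{i < M} (1 + x aⁱ) (1 + y aⁱ) = ∑_j [2M, j]_a w_j` (`x y = a`): after multiplying by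
`(a; a)_{2M}` every Gaussian binomial is `≡ 1` modulo a high power of `q`, which passes to the
limit. Then `∑ a̅_{2m+1}(n) qⁿ = 1 / (φ(-q) φ(-q²)^{2m})`; writing `φ(-q) = 1 + 2 s(q)`, this is
`1 - 2 s(q) + 4 s(q)² + 4 m (s(q²) + s(q²)²)` modulo `8`, and at an odd exponent `N` only
`-2 [q^N] s` survives. For `N = 8 (5n + 3) + 1` this is `2` exactly when `N = (10k + 5)²`, i.e.
`n = 5 k (k + 1) / 2`, and `0` otherwise. On the other side `f₁³ = ψ(q) φ(-q)² ≡ ψ(q)` modulo `4`,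
so `g(n) ≡ [qⁿ] ψ(q⁵)`, which is `1` for exactly the same `n` and `0` otherwise.
-/

open PowerSeries Finset

section GaussBinom

variable {R : Type*} [CommSemiring R] (a : R)

def gaussBinom : ℕ → ℕ → R
  | _, 0 => 1
  | 0, _ + 1 => 0
  | n + 1, k + 1 => gaussBinom n k + a ^ (k + 1) * gaussBinom n (k + 1)

@[simp]
lemma gaussBinom_zero_right (n : ℕ) : gaussBinom a n 0 = 1 := by
  cases n <;> rfl

lemma gaussBinom_succ_succ (n k : ℕ) :
    gaussBinom a (n + 1) (k + 1) = gaussBinom a n k + a ^ (k + 1) * gaussBinom a n (k + 1) :=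
  rfl

lemma gaussBinom_eq_zero_of_lt {n k : ℕ} (h : n < k) : gaussBinom a n k = 0 := by
  induction n generalizing k with
  | zero => obtain ⟨k, rfl⟩ := Nat.exists_eq_add_of_lt h; rfl
  | succ n ih =>
    obtain ⟨k, rfl⟩ := Nat.exists_eq_add_one.2 (Nat.zero_lt_of_lt h)
    rw [gaussBinom_succ_succ, ih (by omega), ih (by omega), mul_zero, add_zero]

/-- The semiring form of `(1 - a ^ (n - k)) [n, k] = (1 - a ^ (k + 1)) [n, k + 1]`. -/
lemma gaussBinom_add_pow_mul_gaussBinom (n k : ℕ) :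
    gaussBinom a n k + a ^ (k + 1) * gaussBinom a n (k + 1) =
      a ^ (n - k) * gaussBinom a n k + gaussBinom a n (k + 1) := by
  induction n generalizing k with
  | zero => cases k <;> simp [gaussBinom_eq_zero_of_lt]
  | succ n ih =>
    cases k with
    | zero =>
      have h := ih 0
      simp only [gaussBinom_zero_right, zero_add, Nat.sub_zero, mul_one, pow_one] at h ⊢
      calc 1 + a * gaussBinom a (n + 1) 1 = 1 + a * (1 + a * gaussBinom a n 1) := by
            rw [gaussBinom_succ_succ, gaussBinom_zero_right, zero_add, pow_one]
        _ = 1 + a * (a ^ n + gaussBinom a n 1) := by rw [h]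
        _ = a ^ (n + 1) + gaussBinom a (n + 1) 1 := by
            rw [gaussBinom_succ_succ, gaussBinom_zero_right, zero_add, pow_one]
            ring
    | succ k =>
      rcases Nat.lt_or_ge n (k + 1) with hn | hn
      · simp [gaussBinom_eq_zero_of_lt a (show n + 1 < k + 1 + 1 by omega),
          show n + 1 - (k + 1) = 0 by omega]
      · obtain ⟨d, rfl⟩ := Nat.exists_eq_add_of_le hn
        have h1 := ih k
        have h2 := congrArg (a ^ (k + 2) * ·) (ih (k + 1))
        simp only [gaussBinom_succ_succ, show k + 1 + d - k = d + 1 by omega,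
          show k + 1 + d - (k + 1) = d by omega, show k + 1 + d + 1 - (k + 1) = d + 1 by omega]
          at h1 h2 ⊢
        conv_lhs => rw [h1, h2]
        ring

lemma gaussBinom_succ_succ' (n k : ℕ) :
    gaussBinom a (n + 1) (k + 1) = a ^ (n - k) * gaussBinom a n k + gaussBinom a n (k + 1) := by
  rw [gaussBinom_succ_succ, gaussBinom_add_pow_mul_gaussBinom]

lemma sum_range_gaussBinom_succ_mul (n : ℕ) (f : ℕ → R) :
    ∑ j ∈ range (n + 2), gaussBinom a (n + 1) j * f j =
      ∑ j ∈ range (n + 1), gaussBinom a n j * (a ^ j * f j + f (j + 1)) := by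
  have htop : ∑ j ∈ range (n + 2), a ^ j * gaussBinom a n j * f j =
      ∑ j ∈ range (n + 1), a ^ j * gaussBinom a n j * f j := by
    rw [sum_range_succ _ (n + 1), gaussBinom_eq_zero_of_lt a (Nat.lt_succ_self n), mul_zero,
      zero_mul, add_zero]
  rw [sum_range_succ' _ (n + 1)] at htop
  simp only [sum_range_succ' _ (n + 1), gaussBinom_succ_succ, gaussBinom_zero_right, add_mul,
    mul_add, sum_add_distrib, pow_zero, one_mul] at htop ⊢
  rw [add_assoc, htop, add_comm]
  exact congrArg (· + _) (sum_congr rfl fun j _ => by ring)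

lemma sum_range_gaussBinom_succ_mul' (n : ℕ) (f : ℕ → R) :
    ∑ j ∈ range (n + 2), gaussBinom a (n + 1) j * f j =
      ∑ j ∈ range (n + 1), gaussBinom a n j * (f j + a ^ (n - j) * f (j + 1)) := by
  have htop : ∑ j ∈ range (n + 2), gaussBinom a n j * f j =
      ∑ j ∈ range (n + 1), gaussBinom a n j * f j := by
    rw [sum_range_succ _ (n + 1), gaussBinom_eq_zero_of_lt a (Nat.lt_succ_self n), zero_mul,
      add_zero]
  rw [sum_range_succ' _ (n + 1)] at htop
  simp only [sum_range_succ' _ (n + 1), gaussBinom_succ_succ', gaussBinom_zero_right, add_mul,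
    mul_add, sum_add_distrib, one_mul] at htop ⊢
  rw [add_assoc, htop, add_comm]
  exact congrArg (_ + ·) (sum_congr rfl fun j _ => by ring)

end GaussBinom

section JacobiTripleProduct

variable {R : Type*} [CommSemiring R] (a x y : R)

/-- The weight of `[2M, j]_a` in the finite Jacobi triple product; both branches are `1` at
`j = M`. -/
def jacobiWeight (M j : ℕ) : R :=
  if M ≤ j then x ^ (j - M) * a ^ (j - M).choose 2 else y ^ (M - j) * a ^ (M - j).choose 2

lemma jacobiWeight_of_le {M j : ℕ} (h : M ≤ j) :
    jacobiWeight a x y M j = x ^ (j - M) * a ^ (j - M).choose 2 :=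
  if_pos h

lemma jacobiWeight_of_ge {M j : ℕ} (h : j ≤ M) :
    jacobiWeight a x y M j = y ^ (M - j) * a ^ (M - j).choose 2 := by
  rcases h.lt_or_eq with h | rfl
  · exact if_neg (by omega)
  · simp [jacobiWeight]

lemma jacobiWeight_succ_succ (M j : ℕ) :
    jacobiWeight a x y (M + 1) (j + 1) = jacobiWeight a x y M j := by
  simp [jacobiWeight]

variable {a x y}

lemma pow_mul_jacobiWeight_succ (hxy : x * y = a) (M j : ℕ) :
    a ^ j * jacobiWeight a x y (M + 1) j = y * a ^ M * jacobiWeight a x y M j := by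
  rcases Nat.lt_or_ge M j with h | h
  · obtain ⟨d, rfl⟩ := Nat.exists_eq_add_of_lt h
    rw [jacobiWeight_of_le _ _ _ h, jacobiWeight_of_le _ _ _ (by omega),
      show M + d + 1 - M = d + 1 by omega, show M + d + 1 - (M + 1) = d by omega,
      Nat.choose_succ_succ', Nat.choose_one_right, ← hxy]
    ring
  · obtain ⟨d, rfl⟩ := Nat.exists_eq_add_of_le h
    rw [jacobiWeight_of_ge _ _ _ h, jacobiWeight_of_ge _ _ _ (by omega),
      show j + d + 1 - j = d + 1 by omega, show j + d - j = d by omega,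
      Nat.choose_succ_succ', Nat.choose_one_right]
    ring

lemma pow_mul_jacobiWeight_succ_add_two (hxy : x * y = a) {M j : ℕ} (hj : j ≤ 2 * M) :
    a ^ (2 * M - j) * jacobiWeight a x y (M + 1) (j + 2) = x * a ^ M * jacobiWeight a x y M j := by
  rcases Nat.lt_or_ge j M with h | h
  · obtain ⟨d, rfl⟩ := Nat.exists_eq_add_of_lt h
    rw [jacobiWeight_of_ge _ _ _ (by omega), jacobiWeight_of_ge _ _ _ h.le,
      show j + d + 1 + 1 - (j + 2) = d by omega, show j + d + 1 - j = d + 1 by omega,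
      show 2 * (j + d + 1) - j = j + d + 1 + d + 1 by omega,
      Nat.choose_succ_succ', Nat.choose_one_right, ← hxy]
    ring
  · obtain ⟨d, rfl⟩ := Nat.exists_eq_add_of_le h
    rw [jacobiWeight_of_le _ _ _ (by omega), jacobiWeight_of_le _ _ _ h,
      show M + d + 2 - (M + 1) = d + 1 by omega, show M + d - M = d by omega,
      Nat.choose_succ_succ', Nat.choose_one_right]
    obtain ⟨e, rfl⟩ := Nat.exists_eq_add_of_le (show d ≤ M by omega)
    rw [show 2 * (d + e) - (d + e + d) = e by omega]
    ring

theorem prod_one_add_mul_one_add_eq_sum_gaussBinom (hxy : x * y = a) (M : ℕ) :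
    ∏ i ∈ range M, (1 + x * a ^ i) * (1 + y * a ^ i) =
      ∑ j ∈ range (2 * M + 1), gaussBinom a (2 * M) j * jacobiWeight a x y M j := by
  induction M with
  | zero => simp [jacobiWeight]
  | succ M ih =>
    rw [prod_range_succ, ih, show 2 * (M + 1) + 1 = 2 * M + 1 + 2 by ring,
      show 2 * (M + 1) = 2 * M + 1 + 1 by ring, sum_range_gaussBinom_succ_mul,
      sum_range_gaussBinom_succ_mul', sum_mul]
    refine sum_congr rfl fun j hj => ?_
    have hj : j ≤ 2 * M := Nat.lt_succ_iff.mp (mem_range.mp hj)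
    have hmid : a ^ (2 * M - j) * (a ^ (j + 1) * jacobiWeight a x y (M + 1) (j + 1)) =
        a ^ (2 * M + 1) * jacobiWeight a x y M j := by
      rw [jacobiWeight_succ_succ, ← mul_assoc, ← pow_add,
        show 2 * M - j + (j + 1) = 2 * M + 1 by omega]
    rw [mul_add (a ^ (2 * M - j)), hmid, pow_mul_jacobiWeight_succ_add_two hxy hj,
      pow_mul_jacobiWeight_succ hxy, jacobiWeight_succ_succ, ← hxy]
    ring

theorem sum_jacobiWeight (M : ℕ) :
    ∑ j ∈ range (2 * M + 1), jacobiWeight a x y M j =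
      1 + ∑ k ∈ range M, (x ^ (k + 1) + y ^ (k + 1)) * a ^ (k + 1).choose 2 := by
  induction M with
  | zero => simp [jacobiWeight]
  | succ M ih =>
    rw [show 2 * (M + 1) + 1 = 2 * M + 1 + 1 + 1 by ring, sum_range_succ, sum_range_succ']
    simp only [jacobiWeight_succ_succ]
    rw [ih, jacobiWeight_of_le a x y (show M ≤ 2 * M + 1 by omega),
      jacobiWeight_of_ge a x y (Nat.zero_le (M + 1)), show 2 * M + 1 - M = M + 1 by omega,
      Nat.sub_zero, sum_range_succ _ M]
    ring

end JacobiTripleProduct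

section QPochhammer

variable {R : Type*} [CommRing R]

def qPochhammer (b a : R) (n : ℕ) : R :=
  ∏ i ∈ range n, (1 - b * a ^ i)

lemma qPochhammer_zero (b a : R) : qPochhammer b a 0 = 1 :=
  prod_range_zero _

lemma qPochhammer_succ (b a : R) (n : ℕ) :
    qPochhammer b a (n + 1) = qPochhammer b a n * (1 - b * a ^ n) :=
  prod_range_succ _ n

lemma qPochhammer_succ' (b a : R) (n : ℕ) :
    qPochhammer b a (n + 1) = (1 - b) * qPochhammer (b * a) a n := by
  simp only [qPochhammer, prod_range_succ', pow_succ, pow_zero, mul_one, mul_assoc, mul_comm]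

lemma qPochhammer_add (b a : R) (m n : ℕ) :
    qPochhammer b a (m + n) = qPochhammer b a m * qPochhammer (b * a ^ m) a n := by
  simp only [qPochhammer, prod_range_add, pow_add, mul_assoc]

lemma qPochhammer_smodEq_one (b a : R) (n : ℕ) :
    qPochhammer b a n ≡ 1 [SMOD Ideal.span {b}] := by
  rw [← prod_const_one (s := range n)]
  refine SModEq.prod fun i _ => SModEq.sub_mem.2 ?_
  rw [sub_sub_cancel_left]
  exact (Ideal.neg_mem_iff _).2 (Ideal.mul_mem_right _ _ (Ideal.mem_span_singleton_self b))

lemma qPochhammer_add_smodEq (b a : R) (m n : ℕ) :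
    qPochhammer b a (m + n) ≡ qPochhammer b a m [SMOD Ideal.span {b * a ^ m}] := by
  rw [qPochhammer_add]
  simpa using (SModEq.refl (qPochhammer b a m)).mul (qPochhammer_smodEq_one (b * a ^ m) a n)

lemma gaussBinom_mul_qPochhammer (a : R) {n k : ℕ} (hk : k ≤ n) :
    gaussBinom a n k * qPochhammer a a k = qPochhammer (a ^ (n - k + 1)) a k := by
  induction n generalizing k with
  | zero => simp [Nat.le_zero.1 hk, qPochhammer_zero]
  | succ n ih =>
    cases k with
    | zero => simp [qPochhammer_zero]
    | succ k =>
      have hk : k ≤ n := by omega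
      have hnext : gaussBinom a n (k + 1) * qPochhammer a a (k + 1) =
          (1 - a ^ (n - k)) * qPochhammer (a ^ (n - k + 1)) a k := by
        rcases hk.lt_or_eq with hk | rfl
        · rw [ih hk, qPochhammer_succ', show n - (k + 1) + 1 = n - k by omega, ← pow_succ]
        · rw [gaussBinom_eq_zero_of_lt a (Nat.lt_succ_self k), Nat.sub_self, pow_zero, sub_self,
            zero_mul, zero_mul]
      have hpow : a ^ (k + 1) * a ^ (n - k) = a ^ (n - k + 1) * a ^ k := by
        rw [← pow_add, ← pow_add, show k + 1 + (n - k) = n - k + 1 + k by omega]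
      calc gaussBinom a (n + 1) (k + 1) * qPochhammer a a (k + 1)
          = gaussBinom a n k * qPochhammer a a k * (1 - a * a ^ k) +
              a ^ (k + 1) * (gaussBinom a n (k + 1) * qPochhammer a a (k + 1)) := by
            rw [gaussBinom_succ_succ, qPochhammer_succ a a k]
            ring
        _ = qPochhammer (a ^ (n + 1 - (k + 1) + 1)) a (k + 1) := by
            rw [ih hk, hnext, show n + 1 - (k + 1) = n - k by omega, qPochhammer_succ]
            linear_combination qPochhammer (a ^ (n - k + 1)) a k * hpow

lemma gaussBinom_mul_qPochhammer_eq_mul (a : R) {n k : ℕ} (hk : k ≤ n) :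
    gaussBinom a n k * qPochhammer a a n =
      qPochhammer (a ^ (n - k + 1)) a k * qPochhammer (a ^ (k + 1)) a (n - k) := by
  rw [← Nat.add_sub_of_le hk, qPochhammer_add, ← mul_assoc, Nat.add_sub_of_le hk,
    gaussBinom_mul_qPochhammer a hk, ← pow_succ']

/-- `gaussBinom a n j * qPochhammer a a n` is a product of two `q`-Pochhammer symbols, hence `≡ 1`
modulo `a ^ (min j (n - j) + 1)`; the weights far from the middle must be negligible on their
own. -/
theorem sum_gaussBinom_mul_qPochhammer_smodEq (a : R) (I : Ideal R) (n : ℕ) (w : ℕ → R)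
    (hw : ∀ j ≤ n, a ^ (min j (n - j) + 1) ∈ I ∨ w j ∈ I) :
    (∑ j ∈ range (n + 1), gaussBinom a n j * w j) * qPochhammer a a n ≡
      ∑ j ∈ range (n + 1), w j [SMOD I] := by
  rw [sum_mul]
  refine SModEq.sum fun j hj => ?_
  have hj : j ≤ n := Nat.lt_succ_iff.mp (mem_range.mp hj)
  rw [mul_right_comm, gaussBinom_mul_qPochhammer_eq_mul a hj]
  rcases hw j hj with ha | hw
  · have hle : ∀ e, min j (n - j) ≤ e → Ideal.span {a ^ (e + 1)} ≤ I := fun e he =>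
      (Ideal.span_singleton_le_span_singleton.2 (pow_dvd_pow a (by omega))).trans
        ((Ideal.span_singleton_le_iff_mem I).2 ha)
    have h1 := (qPochhammer_smodEq_one (a ^ (n - j + 1)) a j).mono (hle _ (min_le_right _ _))
    have h2 := (qPochhammer_smodEq_one (a ^ (j + 1)) a (n - j)).mono (hle _ (min_le_left _ _))
    simpa using (h1.mul h2).mul (SModEq.refl (w j))
  · exact (SModEq.zero.2 (I.mul_mem_left _ hw)).trans (SModEq.zero.2 hw).symm

lemma qPochhammer_two_mul (b a : R) (n : ℕ) :
    qPochhammer b a (2 * n) = qPochhammer b (a ^ 2) n * qPochhammer (b * a) (a ^ 2) n := by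
  induction n with
  | zero => simp [qPochhammer_zero]
  | succ n ih =>
    rw [show 2 * (n + 1) = 2 * n + 1 + 1 by ring, qPochhammer_succ, qPochhammer_succ, ih,
      qPochhammer_succ, qPochhammer_succ]
    ring

lemma qPochhammer_mul_qPochhammer_neg (b a : R) (n : ℕ) :
    qPochhammer b a n * qPochhammer (-b) a n = qPochhammer (b ^ 2) (a ^ 2) n := by
  simp only [qPochhammer, ← prod_mul_distrib]
  exact prod_congr rfl fun i _ => by ring

end QPochhammer

section Truncation

variable {R : Type*} [CommRing R]

lemma smodEq_X_pow_iff {K : ℕ} {f g : R⟦X⟧} :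
    f ≡ g [SMOD Ideal.span {(X : R⟦X⟧) ^ K}] ↔ ∀ n < K, coeff n f = coeff n g := by
  simp only [SModEq.sub_mem, Ideal.mem_span_singleton, X_pow_dvd_iff, map_sub, sub_eq_zero]

lemma eq_of_forall_smodEq_X_pow {f g : R⟦X⟧}
    (h : ∀ K, f ≡ g [SMOD Ideal.span {(X : R⟦X⟧) ^ K}]) : f = g :=
  ext fun n => smodEq_X_pow_iff.1 (h (n + 1)) n n.lt_succ_self

lemma SModEq.of_X_pow_dvd {K : ℕ} {t f g : R⟦X⟧} (ht : X ^ K ∣ t)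
    (h : f ≡ g [SMOD Ideal.span {t}]) : f ≡ g [SMOD Ideal.span {(X : R⟦X⟧) ^ K}] :=
  h.mono (Ideal.span_singleton_le_span_singleton.2 ht)

lemma SModEq.expand_X_pow {K p : ℕ} (hp : p ≠ 0) {f g : R⟦X⟧}
    (h : f ≡ g [SMOD Ideal.span {(X : R⟦X⟧) ^ K}]) :
    expand p hp f ≡ expand p hp g [SMOD Ideal.span {(X : R⟦X⟧) ^ K}] := by
  rw [SModEq.sub_mem, Ideal.mem_span_singleton] at h ⊢
  obtain ⟨u, hu⟩ := h
  refine ⟨X ^ (p * K - K) * expand p hp u, ?_⟩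
  rw [← map_sub, hu, map_mul, map_pow, expand_X, ← pow_mul, ← mul_assoc, ← pow_add,
    Nat.add_sub_cancel' (Nat.le_mul_of_pos_left K (Nat.pos_of_ne_zero hp))]

lemma qPochInf_smodEq (R : Type*) [CommRing R] {h : ℕ} (hh : 0 < h) {K c : ℕ} (hc : K ≤ c) :
    qPochInf R h ≡ qPochhammer (X ^ h) (X ^ h) c [SMOD Ideal.span {(X : R⟦X⟧) ^ K}] := by
  refine smodEq_X_pow_iff.2 fun n hn => ?_
  have htail := qPochhammer_add_smodEq (X ^ h : R⟦X⟧) (X ^ h) (n + 1) (c - (n + 1))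
  rw [Nat.add_sub_of_le (by omega)] at htail
  rw [smodEq_X_pow_iff.1 (htail.of_X_pow_dvd (K := n + 1) ?_) n n.lt_succ_self]
  · simp only [qPochInf, coeff_mk, qPochhammer, ← pow_mul, ← pow_add, mul_add, mul_one,
      add_comm h]
  · rw [← pow_mul, ← pow_add]
    exact pow_dvd_pow X (by nlinarith)

lemma expand_qPochInf (R : Type*) [CommRing R] {p h : ℕ} (hp : p ≠ 0) (hh : 0 < h) :
    expand p hp (qPochInf R h) = qPochInf R (p * h) := by
  refine eq_of_forall_smodEq_X_pow fun K => ?_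
  have hexp : expand p hp (qPochhammer (X ^ h) (X ^ h) K : R⟦X⟧) =
      qPochhammer (X ^ (p * h)) (X ^ (p * h)) K := by
    simp only [qPochhammer, map_prod, map_sub, map_one, map_mul, map_pow, expand_X, ← pow_mul,
      mul_assoc]
  calc expand p hp (qPochInf R h)
      ≡ expand p hp (qPochhammer (X ^ h) (X ^ h) K) [SMOD Ideal.span {(X : R⟦X⟧) ^ K}] :=
        (qPochInf_smodEq R hh le_rfl).expand_X_pow hp
    _ = qPochhammer (X ^ (p * h)) (X ^ (p * h)) K := hexp
    _ ≡ qPochInf R (p * h) [SMOD Ideal.span {(X : R⟦X⟧) ^ K}] :=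
        (qPochInf_smodEq R (Nat.mul_pos (Nat.pos_of_ne_zero hp) hh) le_rfl).symm

/-- The power series `∑_k c k X^(e k)`; the finite sum computing a coefficient catches every `k`
as soon as `k ≤ e k`, e.g. for strictly monotone `e`. -/
def lacunary (e : ℕ → ℕ) (c : ℕ → R) : R⟦X⟧ :=
  mk fun n => ∑ k ∈ range (n + 1), if e k = n then c k else 0

variable {e : ℕ → ℕ} (c : ℕ → R)

lemma lacunary_smodEq_sum (he : StrictMono e) (N : ℕ) :
    lacunary e c ≡ ∑ k ∈ range N, C (c k) * X ^ e k
      [SMOD Ideal.span {(X : R⟦X⟧) ^ N}] := by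
  refine smodEq_X_pow_iff.2 fun n hn => ?_
  simp only [lacunary, coeff_mk, map_sum, coeff_C_mul_X_pow, eq_comm (a := n)]
  refine sum_subset (range_subset_range.2 hn) fun k _ hk => if_neg fun hkn => hk ?_
  exact mem_range.2 (Nat.lt_succ_of_le (hkn ▸ he.id_le k))

lemma coeff_lacunary_apply (he : StrictMono e) (k : ℕ) :
    coeff (e k) (lacunary e c) = c k := by
  rw [lacunary, coeff_mk, sum_eq_single_of_mem k (mem_range.2 (Nat.lt_succ_of_le (he.id_le k)))
    fun j _ hj => if_neg (he.injective.ne hj), if_pos rfl]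

lemma coeff_lacunary_of_forall_ne {n : ℕ} (hn : ∀ k, e k ≠ n) :
    coeff n (lacunary e c) = 0 :=
  (coeff_mk _ _).trans (sum_eq_zero fun k _ => if_neg (hn k))

end Truncation

section GaussIdentities

lemma two_mul_choose_two_succ (k : ℕ) : 2 * (k + 1).choose 2 = (k + 1) * k := by
  induction k with
  | zero => rfl
  | succ k ih =>
    rw [Nat.choose_succ_succ', Nat.choose_one_right, mul_add, ih]
    ring

lemma mem_span_X_pow_of_le_choose {R : Type*} [CommRing R] {B K d : ℕ} (hB : 0 < B)
    (hd : K + 2 ≤ d) (z : R⟦X⟧) :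
    z * (X ^ B) ^ d.choose 2 ∈ Ideal.span {(X : R⟦X⟧) ^ K} := by
  have hK : K + 1 ≤ (K + 2).choose 2 := by
    rw [Nat.choose_succ_succ', Nat.choose_one_right]
    omega
  refine Ideal.mem_span_singleton.2 (Dvd.dvd.mul_left ?_ z)
  rw [← pow_mul]
  exact pow_dvd_pow X (by nlinarith [Nat.choose_le_choose 2 hd])

/-- The finite Jacobi triple product modulo `X ^ K`, once multiplied by `(X^B; X^B)_(2M)`:
the Gaussian binomials disappear, and what is left is an initial segment of the theta series. -/
theorem prod_mul_qPochhammer_smodEq {R : Type*} [CommRing R] {B K M : ℕ} (hB : 0 < B)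
    (hKM : 2 * K ≤ M) {x y : R⟦X⟧} (hxy : x * y = X ^ B) :
    (∏ i ∈ range M, (1 + x * (X ^ B) ^ i) * (1 + y * (X ^ B) ^ i)) *
        qPochhammer (X ^ B) (X ^ B) (2 * M) ≡
      1 + ∑ k ∈ range M, (x ^ (k + 1) + y ^ (k + 1)) * (X ^ B) ^ (k + 1).choose 2
      [SMOD Ideal.span {(X : R⟦X⟧) ^ K}] := by
  rw [prod_one_add_mul_one_add_eq_sum_gaussBinom hxy, ← sum_jacobiWeight]
  refine sum_gaussBinom_mul_qPochhammer_smodEq _ _ _ _ fun j _ => ?_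
  have hclose : ∀ m, K ≤ B * (m + 1) → (X ^ B : R⟦X⟧) ^ (m + 1) ∈ Ideal.span {X ^ K} :=
    fun m hm => Ideal.mem_span_singleton.2 (by rw [← pow_mul]; exact pow_dvd_pow X hm)
  rcases le_total M j with h | h
  · rw [jacobiWeight_of_le _ _ _ h, min_eq_right (by omega)]
    by_cases hK : K ≤ B * (2 * M - j + 1)
    · exact .inl (hclose _ hK)
    · have := Nat.le_mul_of_pos_left (2 * M - j + 1) hB
      exact .inr (mem_span_X_pow_of_le_choose hB (by omega) _)
  · rw [jacobiWeight_of_ge _ _ _ h, min_eq_left (by omega)]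
    by_cases hK : K ≤ B * (j + 1)
    · exact .inl (hclose _ hK)
    · have := Nat.le_mul_of_pos_left (j + 1) hB
      exact .inr (mem_span_X_pow_of_le_choose hB (by omega) _)

/-- `∑_{k ≥ 1} (-1)^k q^(k²)`. -/
def signedSquareSeries : ℤ⟦X⟧ :=
  lacunary (fun k => (k + 1) ^ 2) fun k => (-1) ^ (k + 1)

/-- Ramanujan's `φ(-q) = ∑_{k ∈ ℤ} (-1)^k q^(k²)`. -/
noncomputable def phiNeg : ℤ⟦X⟧ :=
  1 + 2 * signedSquareSeries

/-- Ramanujan's `ψ(q) = ∑_{k ≥ 0} q^(k(k+1)/2)`. -/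
def triangularSeries : ℤ⟦X⟧ :=
  lacunary (fun k => (k + 1).choose 2) fun _ => 1

lemma strictMono_add_one_sq : StrictMono fun k : ℕ => (k + 1) ^ 2 :=
  fun _ _ h => Nat.pow_lt_pow_left (by omega) two_ne_zero

lemma strictMono_choose_two : StrictMono fun k : ℕ => (k + 1).choose 2 :=
  strictMono_nat_of_lt_succ fun k => by
    have h := Nat.choose_succ_succ' (k + 1) 1
    rw [Nat.choose_one_right] at h
    exact Nat.lt_of_lt_of_le (Nat.lt_add_of_pos_left k.succ_pos) h.ge

/-- The triple product at `a = X²`, `x = y = -X`. -/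
lemma qPochhammer_sq_mul_smodEq_phiNeg (K : ℕ) :
    qPochhammer (X : ℤ⟦X⟧) (X ^ 2) (2 * K) ^ 2 * qPochhammer (X ^ 2) (X ^ 2) (2 * (2 * K)) ≡
      phiNeg [SMOD Ideal.span {(X : ℤ⟦X⟧) ^ K}] := by
  have hprod : ∏ i ∈ range (2 * K), (1 + -X * (X ^ 2) ^ i) * (1 + -X * (X ^ 2) ^ i) =
      qPochhammer (X : ℤ⟦X⟧) (X ^ 2) (2 * K) ^ 2 := by
    simp only [qPochhammer, sq, ← prod_mul_distrib]
    exact prod_congr rfl fun i _ => by ring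
  have hterm : ∀ k, ((-X) ^ (k + 1) + (-X) ^ (k + 1)) * (X ^ 2 : ℤ⟦X⟧) ^ (k + 1).choose 2 =
      2 * (C ((-1) ^ (k + 1)) * X ^ ((k + 1) ^ 2)) := fun k => by
    rw [map_pow, map_neg, map_one, neg_pow X, ← pow_mul,
      show (k + 1) ^ 2 = k + 1 + 2 * (k + 1).choose 2 by rw [two_mul_choose_two_succ]; ring]
    ring
  have hjacobi := prod_mul_qPochhammer_smodEq (K := K) two_pos le_rfl
    (show (-X : ℤ⟦X⟧) * -X = X ^ 2 by ring)
  rw [hprod, sum_congr rfl fun k _ => hterm k, ← mul_sum] at hjacobi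
  have htheta := (lacunary_smodEq_sum (fun k => (-1 : ℤ) ^ (k + 1)) strictMono_add_one_sq
    (2 * K)).of_X_pow_dvd (pow_dvd_pow X (by omega : K ≤ 2 * K))
  exact hjacobi.trans (SModEq.rfl.add (SModEq.rfl.mul htheta.symm))

/-- The triple product at `a = X`, `x = X`, `y = 1`; the factor `1 + y` is the `2`. -/
lemma qPochhammer_neg_mul_smodEq_triangularSeries (K : ℕ) :
    qPochhammer (-X : ℤ⟦X⟧) X (2 * K + 1) * (2 * qPochhammer (-X) X (2 * K)) *
        qPochhammer X X (2 * (2 * K + 1)) ≡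
      2 * triangularSeries [SMOD Ideal.span {(X : ℤ⟦X⟧) ^ K}] := by
  have hprod :
      ∏ i ∈ range (2 * K + 1), (1 + X * (X ^ 1) ^ i) * (1 + 1 * (X ^ 1 : ℤ⟦X⟧) ^ i) =
      qPochhammer (-X) X (2 * K + 1) * (2 * qPochhammer (-X) X (2 * K)) := by
    have hminus : qPochhammer (-1 : ℤ⟦X⟧) X (2 * K + 1) = 2 * qPochhammer (-X) X (2 * K) := by
      rw [qPochhammer_succ', neg_one_mul]
      ring
    rw [← hminus, qPochhammer, qPochhammer, ← prod_mul_distrib]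
    exact prod_congr rfl fun i _ => by ring
  have hterm : ∀ k, (X ^ (k + 1) + 1 ^ (k + 1)) * (X ^ 1 : ℤ⟦X⟧) ^ (k + 1).choose 2 =
      C 1 * X ^ (k + 1 + 1).choose 2 + C 1 * X ^ (k + 1).choose 2 := fun k => by
    rw [map_one, Nat.choose_succ_succ' (k + 1) 1, Nat.choose_one_right, pow_one, pow_add]
    ring
  have hshift : ∑ k ∈ range (2 * K + 2), C 1 * X ^ (k + 1).choose 2 =
      ∑ k ∈ range (2 * K + 1), C 1 * X ^ (k + 1 + 1).choose 2 + (1 : ℤ⟦X⟧) := by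
    simp [sum_range_succ' _ (2 * K + 1)]
  have hjacobi := prod_mul_qPochhammer_smodEq (K := K) one_pos (by omega : 2 * K ≤ 2 * K + 1)
    (show (X : ℤ⟦X⟧) * 1 = X ^ 1 by ring)
  rw [hprod, sum_congr rfl fun k _ => hterm k, sum_add_distrib, ← add_assoc, add_comm 1,
    ← hshift, pow_one] at hjacobi
  have htheta : ∀ N, K ≤ N →
      ∑ k ∈ range N, C 1 * X ^ (k + 1).choose 2 ≡ triangularSeries
        [SMOD Ideal.span {(X : ℤ⟦X⟧) ^ K}] := fun N hN =>
    ((lacunary_smodEq_sum (fun _ => (1 : ℤ)) strictMono_choose_two N).of_X_pow_dvd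
      (pow_dvd_pow X hN)).symm
  rw [two_mul triangularSeries]
  exact hjacobi.trans ((htheta _ (by omega)).add (htheta _ (by omega)))

theorem qPochInf_one_sq : qPochInf ℤ 1 ^ 2 = qPochInf ℤ 2 * phiNeg := by
  refine eq_of_forall_smodEq_X_pow fun K => ?_
  have h1 : qPochInf ℤ 1 ≡ qPochhammer X (X ^ 2) (2 * K) * qPochhammer (X ^ 2) (X ^ 2) (2 * K)
      [SMOD Ideal.span {(X : ℤ⟦X⟧) ^ K}] := by
    have := qPochInf_smodEq ℤ one_pos (K := K) (c := 2 * (2 * K)) (by omega)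
    rwa [pow_one, qPochhammer_two_mul, ← sq] at this
  have h2 : qPochInf ℤ 2 ≡ qPochhammer (X ^ 2) (X ^ 2) (2 * K)
      [SMOD Ideal.span {(X : ℤ⟦X⟧) ^ K}] :=
    qPochInf_smodEq ℤ two_pos (by omega)
  have hE : qPochhammer (X ^ 2 : ℤ⟦X⟧) (X ^ 2) (2 * (2 * K)) ≡
      qPochhammer (X ^ 2) (X ^ 2) (2 * K) [SMOD Ideal.span {(X : ℤ⟦X⟧) ^ K}] := by
    have := qPochhammer_add_smodEq (X ^ 2 : ℤ⟦X⟧) (X ^ 2) (2 * K) (2 * K)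
    rw [← two_mul] at this
    refine this.of_X_pow_dvd ?_
    rw [← pow_mul, ← pow_add]
    exact pow_dvd_pow X (by omega)
  calc qPochInf ℤ 1 ^ 2
      ≡ (qPochhammer X (X ^ 2) (2 * K) * qPochhammer (X ^ 2) (X ^ 2) (2 * K)) ^ 2
        [SMOD Ideal.span {(X : ℤ⟦X⟧) ^ K}] := h1.pow 2
    _ = qPochhammer X (X ^ 2) (2 * K) ^ 2 * qPochhammer (X ^ 2) (X ^ 2) (2 * K) *
          qPochhammer (X ^ 2) (X ^ 2) (2 * K) := by ring
    _ ≡ qPochhammer X (X ^ 2) (2 * K) ^ 2 * qPochhammer (X ^ 2) (X ^ 2) (2 * (2 * K)) *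
          qPochhammer (X ^ 2) (X ^ 2) (2 * K) [SMOD Ideal.span {(X : ℤ⟦X⟧) ^ K}] :=
        (SModEq.rfl.mul hE.symm).mul SModEq.rfl
    _ ≡ phiNeg * qPochhammer (X ^ 2) (X ^ 2) (2 * K) [SMOD Ideal.span {(X : ℤ⟦X⟧) ^ K}] :=
        (qPochhammer_sq_mul_smodEq_phiNeg K).mul SModEq.rfl
    _ ≡ qPochInf ℤ 2 * phiNeg [SMOD Ideal.span {(X : ℤ⟦X⟧) ^ K}] := by
        rw [mul_comm]
        exact h2.symm.mul SModEq.rfl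

theorem qPochInf_two_sq : qPochInf ℤ 2 ^ 2 = qPochInf ℤ 1 * triangularSeries := by
  have h2ne : (2 : ℤ⟦X⟧) ≠ 0 := by
    rw [← map_ofNat C 2]
    exact (map_ne_zero_iff _ C_injective).2 two_ne_zero
  refine mul_left_cancel₀ h2ne (eq_of_forall_smodEq_X_pow fun K => ?_)
  have h1 : qPochInf ℤ 1 ≡ qPochhammer X X (2 * K)
      [SMOD Ideal.span {(X : ℤ⟦X⟧) ^ K}] := by
    simpa only [pow_one] using qPochInf_smodEq ℤ one_pos (K := K) (c := 2 * K) (by omega)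
  have h2 : qPochInf ℤ 2 ≡ qPochhammer X X (2 * K) * qPochhammer (-X) X (2 * K)
      [SMOD Ideal.span {(X : ℤ⟦X⟧) ^ K}] := by
    rw [qPochhammer_mul_qPochhammer_neg]
    exact qPochInf_smodEq ℤ two_pos (by omega)
  have hE : qPochhammer (X : ℤ⟦X⟧) X (2 * (2 * K + 1)) ≡ qPochhammer X X (2 * K)
      [SMOD Ideal.span {(X : ℤ⟦X⟧) ^ K}] := by
    have := qPochhammer_add_smodEq (X : ℤ⟦X⟧) X (2 * K) (2 * K + 2)
    rw [show 2 * K + (2 * K + 2) = 2 * (2 * K + 1) by ring] at this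
    refine this.of_X_pow_dvd ?_
    rw [← pow_succ']
    exact pow_dvd_pow X (by omega)
  have hF : qPochhammer (-X : ℤ⟦X⟧) X (2 * K + 1) ≡ qPochhammer (-X) X (2 * K)
      [SMOD Ideal.span {(X : ℤ⟦X⟧) ^ K}] := by
    refine (qPochhammer_add_smodEq (-X : ℤ⟦X⟧) X (2 * K) 1).of_X_pow_dvd ?_
    rw [neg_mul, dvd_neg, ← pow_succ']
    exact pow_dvd_pow X (by omega)
  calc 2 * qPochInf ℤ 2 ^ 2
      ≡ 2 * (qPochhammer X X (2 * K) * qPochhammer (-X) X (2 * K)) ^ 2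
        [SMOD Ideal.span {(X : ℤ⟦X⟧) ^ K}] := SModEq.rfl.mul (h2.pow 2)
    _ = qPochhammer (-X) X (2 * K) * (2 * qPochhammer (-X) X (2 * K)) *
          qPochhammer X X (2 * K) * qPochhammer X X (2 * K) := by ring
    _ ≡ qPochhammer (-X) X (2 * K + 1) * (2 * qPochhammer (-X) X (2 * K)) *
          qPochhammer X X (2 * (2 * K + 1)) * qPochhammer X X (2 * K)
        [SMOD Ideal.span {(X : ℤ⟦X⟧) ^ K}] :=
        ((hF.symm.mul SModEq.rfl).mul hE.symm).mul SModEq.rfl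
    _ ≡ 2 * triangularSeries * qPochhammer X X (2 * K) [SMOD Ideal.span {(X : ℤ⟦X⟧) ^ K}] :=
        (qPochhammer_neg_mul_smodEq_triangularSeries K).mul SModEq.rfl
    _ ≡ 2 * (qPochInf ℤ 1 * triangularSeries) [SMOD Ideal.span {(X : ℤ⟦X⟧) ^ K}] := by
        rw [mul_assoc, mul_comm triangularSeries]
        exact SModEq.rfl.mul (h1.symm.mul SModEq.rfl)

end GaussIdentities

section Overcubic

lemma constantCoeff_qPochInf (R : Type*) [CommRing R] {h : ℕ} (hh : 0 < h) :
    constantCoeff (qPochInf R h) = 1 := by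
  rw [← coeff_zero_eq_constantCoeff_apply, qPochInf, coeff_mk, prod_range_one, map_sub,
    coeff_X_pow, if_neg (by omega), coeff_one, if_pos rfl, sub_zero]

lemma ne_zero_of_constantCoeff_eq_one {R : Type*} [CommRing R] [Nontrivial R] {f : R⟦X⟧}
    (h : constantCoeff f = 1) : f ≠ 0 := by
  rintro rfl
  simp at h

lemma constantCoeff_phiNeg : constantCoeff phiNeg = 1 := by
  rw [phiNeg, ← coeff_zero_eq_constantCoeff_apply, map_add, coeff_one, if_pos rfl,
    ← map_ofNat C 2, coeff_C_mul, signedSquareSeries,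
    coeff_lacunary_of_forall_ne _ fun k => by positivity, mul_zero, add_zero]

theorem qPochInf_two_sq_eq_expand :
    qPochInf ℤ 2 ^ 2 = qPochInf ℤ 4 * expand 2 two_ne_zero phiNeg := by
  have h := congrArg (expand 2 two_ne_zero) qPochInf_one_sq
  rwa [map_pow, map_mul, expand_qPochInf ℤ two_ne_zero one_pos,
    expand_qPochInf ℤ two_ne_zero two_pos] at h

theorem qPochInf_one_cube : qPochInf ℤ 1 ^ 3 = triangularSeries * phiNeg ^ 2 := by
  refine mul_left_cancel₀ (ne_zero_of_constantCoeff_eq_one (constantCoeff_qPochInf ℤ one_pos)) ?_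
  linear_combination (qPochInf ℤ 1 ^ 2 + qPochInf ℤ 2 * phiNeg) * qPochInf_one_sq +
    phiNeg ^ 2 * qPochInf_two_sq

theorem IsGenOvercubic.mk_mul_phiNeg_mul_pow_eq_one {abar : ℕ → ℕ → ℕ}
    (habar : IsGenOvercubic abar) (m : ℕ) :
    (mk fun n => (abar (2 * m + 1) n : ℤ)) * phiNeg * expand 2 two_ne_zero phiNeg ^ (2 * m) =
      1 := by
  have h := habar (2 * m + 1) (by omega)
  rw [qPochInf_one_sq, pow_mul, qPochInf_two_sq_eq_expand, Nat.add_sub_cancel,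
    pow_succ (qPochInf ℤ 2) 2, qPochInf_two_sq_eq_expand] at h
  refine mul_right_cancel₀ (b := qPochInf ℤ 2 * qPochInf ℤ 4 ^ (2 * m + 1) *
    expand 2 two_ne_zero phiNeg) ?_ (by linear_combination h)
  refine mul_ne_zero (mul_ne_zero ?_ (pow_ne_zero _ ?_)) ?_ <;>
    refine ne_zero_of_constantCoeff_eq_one ?_
  · exact constantCoeff_qPochInf ℤ two_pos
  · exact constantCoeff_qPochInf ℤ (by norm_num)
  · rw [constantCoeff_expand, constantCoeff_phiNeg]

/-- Modulo `8`, `(1 + 2 s)⁻¹ = 1 - 2 s + 4 s²`, and `(1 + 2 t) ^ (2 m) = 1 + 4 m (t + t²)`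
is its own inverse. -/
lemma eq_of_mul_one_add_two_mul_mul_pow {R : Type*} [CommRing R] (h8 : (8 : R) = 0)
    {A s t : R} (m : ℕ) (h : A * (1 + 2 * s) * (1 + 2 * t) ^ (2 * m) = 1) :
    A = 1 - 2 * s + 4 * s ^ 2 + 4 * m * (t + t ^ 2) := by
  have hpow : ∀ m : ℕ, (1 + 2 * t) ^ (2 * m) = 1 + 4 * m * (t + t ^ 2) := fun m => by
    induction m with
    | zero => simp
    | succ m ih =>
      rw [show 2 * (m + 1) = 2 * m + 2 by ring, pow_add, ih]
      push_cast
      linear_combination 2 * m * (t + t ^ 2) ^ 2 * h8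
  have hs : (1 + 2 * s) * (1 - 2 * s + 4 * s ^ 2) = 1 := by linear_combination s ^ 3 * h8
  have ht : (1 + 4 * m * (t + t ^ 2)) ^ 2 = 1 := by
    linear_combination (m * (t + t ^ 2) + 2 * (m * (t + t ^ 2)) ^ 2) * h8
  rw [hpow] at h
  calc A = A * ((1 + 2 * s) * (1 - 2 * s + 4 * s ^ 2)) * (1 + 4 * m * (t + t ^ 2)) ^ 2 := by
        rw [hs, ht, mul_one, mul_one]
    _ = A * (1 + 2 * s) * (1 + 4 * m * (t + t ^ 2)) *
          ((1 - 2 * s + 4 * s ^ 2) * (1 + 4 * m * (t + t ^ 2))) := by ring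
    _ = 1 - 2 * s + 4 * s ^ 2 + 4 * m * (t + t ^ 2) := by
        rw [h, one_mul]
        linear_combination m * (t + t ^ 2) * (2 * s ^ 2 - s) * h8

lemma coeff_two_mul_add_one_sq {R : Type*} [CommSemiring R] (f : R⟦X⟧) (n : ℕ) :
    coeff (2 * n + 1) (f ^ 2) =
      2 * ∑ i ∈ range (n + 1), coeff i f * coeff (2 * n + 1 - i) f := by
  rw [sq, coeff_mul, Nat.sum_antidiagonal_eq_sum_range_succ (fun i j => coeff i f * coeff j f),
    Nat.succ_eq_add_one, show 2 * n + 1 + 1 = (n + 1) + (n + 1) by ring, sum_range_add,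
    two_mul (∑ i ∈ range (n + 1), coeff i f * coeff (2 * n + 1 - i) f)]
  congr 1
  rw [← sum_range_reflect (fun i => coeff i f * coeff (2 * n + 1 - i) f) (n + 1)]
  refine sum_congr rfl fun i hi => ?_
  have hi := mem_range.1 hi
  rw [show n + 1 + i = 2 * n + 1 - (n + 1 - 1 - i) by omega,
    show 2 * n + 1 - (2 * n + 1 - (n + 1 - 1 - i)) = n + 1 - 1 - i by omega, mul_comm]

theorem IsGenOvercubic.modEq_neg_two_mul_coeff {abar : ℕ → ℕ → ℕ}
    (habar : IsGenOvercubic abar) (m : ℕ) {N : ℕ} (hN : ¬ 2 ∣ N) :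
    (abar (2 * m + 1) N : ℤ) ≡ -2 * coeff N signedSquareSeries [ZMOD 8] := by
  set φ : ℤ⟦X⟧ →+* (ZMod 8)⟦X⟧ := map (Int.castRingHom (ZMod 8))
  have h := congrArg φ (habar.mk_mul_phiNeg_mul_pow_eq_one m)
  simp only [phiNeg, map_add, map_one, map_mul, map_ofNat, map_pow] at h
  have h8 : (8 : (ZMod 8)⟦X⟧) = 0 := by
    rw [← map_ofNat C 8, show (8 : ZMod 8) = 0 by decide, map_zero]
  have hA := congrArg (coeff N) (eq_of_mul_one_add_two_mul_mul_pow h8 m h)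
  have hsq := coeff_two_mul_add_one_sq signedSquareSeries (N / 2)
  rw [show 2 * (N / 2) + 1 = N by omega] at hsq
  have hodd : ∀ f : ℤ⟦X⟧, coeff N (expand 2 two_ne_zero f) = 0 := fun f =>
    coeff_expand_of_not_dvd 2 two_ne_zero f hN
  rw [show (4 * m : (ZMod 8)⟦X⟧) = C (4 * m : ZMod 8) by rw [map_mul, map_natCast, map_ofNat]]
    at hA
  simp only [← map_pow] at hA
  simp only [φ, map_add, map_sub, coeff_map, coeff_mk, coeff_one, coeff_C_mul, ← map_ofNat C,
    hodd, hsq] at hA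
  rw [if_neg (by omega : N ≠ 0)] at hA
  refine (ZMod.intCast_eq_intCast_iff _ _ 8).1 ?_
  push_cast [eq_intCast] at hA ⊢
  rw [hA]
  have h8' : (8 : ZMod 8) = 0 := by decide
  linear_combination (∑ i ∈ range (N / 2 + 1), ((coeff i signedSquareSeries : ℤ) : ZMod 8) *
    ((coeff (N - i) signedSquareSeries : ℤ) : ZMod 8)) * h8'

theorem coeff_qPochInf_cube_modEq {h : ℕ} (hh : h ≠ 0) (n : ℕ) :
    coeff n (qPochInf ℤ h ^ 3) ≡ coeff n (expand h hh triangularSeries) [ZMOD 4] := by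
  have hf : qPochInf ℤ h = expand h hh (qPochInf ℤ 1) := by
    rw [expand_qPochInf ℤ hh one_pos, mul_one]
  rw [hf, ← map_pow, qPochInf_one_cube, show triangularSeries * phiNeg ^ 2 =
      triangularSeries + C 4 * (triangularSeries * (signedSquareSeries + signedSquareSeries ^ 2)) by
    rw [phiNeg, map_ofNat]; ring, map_add, map_mul, expand_C, map_add, coeff_C_mul]
  exact Int.modEq_iff_dvd.2 ⟨-coeff n (expand h hh
    (triangularSeries * (signedSquareSeries + signedSquareSeries ^ 2))), by ring⟩

lemma exists_eq_five_mul_choose_two_of_sq_eq {j n : ℕ} (h : (j + 1) ^ 2 = 8 * (5 * n + 3) + 1) :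
    ∃ k, n = 5 * (k + 1).choose 2 := by
  obtain ⟨s, hs⟩ : 5 ∣ j + 1 :=
    Nat.prime_five.dvd_of_dvd_pow (n := 2) ⟨8 * n + 5, by omega⟩
  rw [hs] at h
  rcases Nat.even_or_odd s with ⟨u, rfl⟩ | ⟨k, rfl⟩
  · ring_nf at h
    omega
  · refine ⟨k, ?_⟩
    nlinarith [two_mul_choose_two_succ k]

theorem coeff_signedSquareSeries_eight_mul_five_mul_add_three (n : ℕ) :
    coeff (8 * (5 * n + 3) + 1) signedSquareSeries =
      -coeff n (expand 5 (by norm_num) triangularSeries) := by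
  by_cases h : ∃ k, n = 5 * (k + 1).choose 2
  · obtain ⟨k, rfl⟩ := h
    have hsq : 8 * (5 * (5 * (k + 1).choose 2) + 3) + 1 = (10 * k + 4 + 1) ^ 2 := by
      nlinarith [two_mul_choose_two_succ k]
    rw [hsq, signedSquareSeries, coeff_lacunary_apply _ strictMono_add_one_sq, coeff_expand_mul,
      triangularSeries, coeff_lacunary_apply _ strictMono_choose_two,
      Odd.neg_one_pow ⟨5 * k + 2, by ring⟩]
  · rw [not_exists] at h
    rw [signedSquareSeries, coeff_lacunary_of_forall_ne _ fun j hj =>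
      (exists_eq_five_mul_choose_two_of_sq_eq hj).elim fun k hk => h k hk, coeff_expand]
    split_ifs with h5
    · obtain ⟨q, rfl⟩ := h5
      rw [triangularSeries, Nat.mul_div_cancel_left _ (by norm_num), coeff_lacunary_of_forall_ne _
        fun k hk => h k (by rw [hk]), neg_zero]
    · rw [neg_zero]

end Overcubic

/-- For all `m, n ≥ 0`, `a̅_{2m+1}(8(5n+3)+1) ≡ 2 g(n) (mod 8)`, where `g(n)` is the
coefficient of `qⁿ` in `f₅³ = (q⁵;q⁵)_∞³`. -/
theorem overcubic_odd_congr_f5_cubed (abar : ℕ → ℕ → ℕ)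
    (habar : IsGenOvercubic abar) (m n : ℕ) :
    (abar (2 * m + 1) (8 * (5 * n + 3) + 1) : ℤ) ≡
      2 * PowerSeries.coeff (R := ℤ) n (qPochInf ℤ 5 ^ 3) [ZMOD 8] := by
  have h8 := habar.modEq_neg_two_mul_coeff m (N := 8 * (5 * n + 3) + 1) (by omega)
  rw [coeff_signedSquareSeries_eight_mul_five_mul_add_three, mul_neg, neg_mul, neg_neg] at h8
  exact h8.trans ((coeff_qPochInf_cube_modEq (by norm_num) n).symm.mul_left' (c := 2))
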